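/- arXiv:0808.1821 — 2 statements merged into one kernel-verified Lean document; each statement's English description precedes it below -/
import Mathlib

section
/- Let Φ=(f_1,…,f_n) be a polynomial automorphism of K^n and deg_1 a p.w.h. degree. For every polynomial P ∈ K[x_1,…,x_n], one has deg_1(P∘Φ) ≤ deg_2(P), and this inequality is strict if and only if P ≠ 0 and P̃ belongs to the ideal of relations I. -/
/-!
Write `P = ∑ c_α x^α`, so that `P ∘ Φ = ∑ c_α f^α`. Since `deg₁ f_i = d_i`, each `f^α` has
`deg₁` at most `deg₂ x^α`, and its component of that degree is `f̄^α`, because top components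
of a product multiply. Hence `deg₁ (P ∘ Φ) ≤ D := deg₂ P`, and the component of degree `D` of
`P ∘ Φ` is `P̃(f̄)`; the inequality is strict exactly when this component vanishes.
-/

open MvPolynomial

/-- Leading term of a polynomial with respect to the weighted homogeneous degree
with weights `w`. -/
noncomputable def ldt {K : Type*} [CommSemiring K] {n : ℕ} (w : Fin n → ℕ)
    (p : MvPolynomial (Fin n) K) : MvPolynomial (Fin n) K :=
  weightedHomogeneousComponent w (weightedTotalDegree w p) p

/-- The ideal of relations between the leading terms of the components of an
automorphism, with respect to the weighted degree with weights `w`. -/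
noncomputable def relIdeal {K : Type*} [CommRing K] {n : ℕ} (w : Fin n → ℕ)
    (f : Fin n → MvPolynomial (Fin n) K) : Ideal (MvPolynomial (Fin n) K) :=
  RingHom.ker
    (aeval (fun i => ldt w (f i)) : MvPolynomial (Fin n) K →ₐ[K] MvPolynomial (Fin n) K)

open Finsupp (weight)

theorem Finsupp.weight_eq_sum_mul {σ : Type*} (d : σ → ℕ) (α : σ →₀ ℕ) :
    weight d α = ∑ i ∈ α.support, α i * d i := by
  simp [weight_apply, Finsupp.sum]

namespace MvPolynomial

section Filtration

variable {R σ : Type*} [CommSemiring R] (w : σ → ℕ)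

theorem weightedTotalDegree'_le_iff {p : MvPolynomial σ R} {m : ℕ} :
    weightedTotalDegree' w p ≤ m ↔ ∀ s ∈ p.support, weight w s ≤ m := by
  simp [weightedTotalDegree', Nat.cast_withBot]

theorem weightedTotalDegree'_le_weightedTotalDegree (p : MvPolynomial σ R) :
    weightedTotalDegree' w p ≤ weightedTotalDegree w p :=
  (weightedTotalDegree'_le_iff w).2 fun _ hs => le_weightedTotalDegree w hs

theorem weightedTotalDegree'_lt_iff_weightedHomogeneousComponent_eq_zero
    {p : MvPolynomial σ R} {m : ℕ} (hp : weightedTotalDegree' w p ≤ m) :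
    weightedTotalDegree' w p < m ↔ weightedHomogeneousComponent w m p = 0 := by
  classical
  rw [weightedTotalDegree'_le_iff] at hp
  simp only [weightedTotalDegree', Finset.sup_lt_iff (WithBot.bot_lt_coe m), Nat.cast_withBot,
    WithBot.coe_lt_coe]
  constructor
  · exact fun h => weightedHomogeneousComponent_eq_zero' m p fun s hs => (h s hs).ne
  · intro h s hs
    refine (hp s hs).lt_of_ne fun hsm => mem_support_iff.1 hs ?_
    simpa [coeff_weightedHomogeneousComponent, hsm] using congr_arg (coeff s) h

theorem weightedTotalDegree'_sum_le {ι : Type*} (s : Finset ι) {g : ι → MvPolynomial σ R}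
    {m : ℕ} (hg : ∀ i ∈ s, weightedTotalDegree' w (g i) ≤ m) :
    weightedTotalDegree' w (∑ i ∈ s, g i) ≤ m := by
  classical
  simp only [weightedTotalDegree'_le_iff] at hg ⊢
  intro t ht
  obtain ⟨i, hi, ht⟩ := Finset.mem_biUnion.1 (support_sum ht)
  exact hg i hi t ht

theorem weightedTotalDegree'_smul_le (c : R) (p : MvPolynomial σ R) :
    weightedTotalDegree' w (c • p) ≤ weightedTotalDegree' w p :=
  Finset.sup_mono support_smul

variable {w}

theorem weightedTotalDegree'_mul_le {a b : MvPolynomial σ R} {p q : ℕ}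
    (ha : weightedTotalDegree' w a ≤ p) (hb : weightedTotalDegree' w b ≤ q) :
    weightedTotalDegree' w (a * b) ≤ (p + q : ℕ) := by
  classical
  rw [weightedTotalDegree'_le_iff] at ha hb ⊢
  intro s hs
  obtain ⟨u, hu, v, hv, rfl⟩ := Finset.mem_add.1 (support_mul a b hs)
  rw [map_add]
  exact add_le_add (ha u hu) (hb v hv)

theorem weightedHomogeneousComponent_mul_of_le {a b : MvPolynomial σ R} {p q : ℕ}
    (ha : weightedTotalDegree' w a ≤ p) (hb : weightedTotalDegree' w b ≤ q) :
    weightedHomogeneousComponent w (p + q) (a * b) =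
      weightedHomogeneousComponent w p a * weightedHomogeneousComponent w q b := by
  classical
  rw [weightedTotalDegree'_le_iff] at ha hb
  ext s
  simp only [coeff_weightedHomogeneousComponent, coeff_mul, ite_zero_mul_ite_zero]
  split_ifs with hs
  · refine Finset.sum_congr rfl fun x hx => ?_
    by_cases hab : coeff x.1 a * coeff x.2 b = 0
    · simp [hab]
    have h1 := ha x.1 (mem_support_iff.2 (left_ne_zero_of_mul hab))
    have h2 := hb x.2 (mem_support_iff.2 (right_ne_zero_of_mul hab))
    rw [Finset.HasAntidiagonal.mem_antidiagonal] at hx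
    rw [← hx, map_add] at hs
    rw [if_pos ⟨by omega, by omega⟩]
  · refine (Finset.sum_eq_zero fun x hx => if_neg ?_).symm
    rintro ⟨h1, h2⟩
    rw [Finset.HasAntidiagonal.mem_antidiagonal] at hx
    exact hs (by rw [← hx, map_add, h1, h2])

theorem IsWeightedHomogeneous.weightedTotalDegree'_le {p : MvPolynomial σ R} {m : ℕ}
    (hp : IsWeightedHomogeneous w p m) : weightedTotalDegree' w p ≤ m :=
  (weightedTotalDegree'_le_iff w).2 fun _ hs => (hp (mem_support_iff.1 hs)).le

theorem weightedTotalDegree'_prod_le {ι : Type*} (s : Finset ι) {g : ι → MvPolynomial σ R}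
    {m : ι → ℕ} (hg : ∀ i ∈ s, weightedTotalDegree' w (g i) ≤ m i) :
    weightedTotalDegree' w (∏ i ∈ s, g i) ≤ (∑ i ∈ s, m i : ℕ) := by
  classical
  induction s using Finset.induction with
  | empty => simpa using (isWeightedHomogeneous_one R w).weightedTotalDegree'_le
  | insert i s hi ih =>
    rw [Finset.prod_insert hi, Finset.sum_insert hi]
    exact weightedTotalDegree'_mul_le (hg i (Finset.mem_insert_self i s))
      (ih fun j hj => hg j (Finset.mem_insert_of_mem hj))

theorem weightedHomogeneousComponent_prod_of_le {ι : Type*} (s : Finset ι)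
    {g : ι → MvPolynomial σ R} {m : ι → ℕ} (hg : ∀ i ∈ s, weightedTotalDegree' w (g i) ≤ m i) :
    weightedHomogeneousComponent w (∑ i ∈ s, m i) (∏ i ∈ s, g i) =
      ∏ i ∈ s, weightedHomogeneousComponent w (m i) (g i) := by
  classical
  induction s using Finset.induction with
  | empty => simpa using (isWeightedHomogeneous_one R w).weightedHomogeneousComponent_same
  | insert i s hi ih =>
    have hs : ∀ j ∈ s, weightedTotalDegree' w (g j) ≤ m j :=
      fun j hj => hg j (Finset.mem_insert_of_mem hj)
    rw [Finset.prod_insert hi, Finset.sum_insert hi, Finset.prod_insert hi,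
      weightedHomogeneousComponent_mul_of_le (hg i (Finset.mem_insert_self i s))
        (weightedTotalDegree'_prod_le s hs), ih hs]

theorem weightedTotalDegree'_pow_le {a : MvPolynomial σ R} {m : ℕ}
    (ha : weightedTotalDegree' w a ≤ m) (k : ℕ) : weightedTotalDegree' w (a ^ k) ≤ (k * m : ℕ) := by
  simpa using weightedTotalDegree'_prod_le (Finset.range k) fun _ _ => ha

theorem weightedHomogeneousComponent_pow_of_le {a : MvPolynomial σ R} {m : ℕ}
    (ha : weightedTotalDegree' w a ≤ m) (k : ℕ) :
    weightedHomogeneousComponent w (k * m) (a ^ k) = weightedHomogeneousComponent w m a ^ k := by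
  simpa using weightedHomogeneousComponent_prod_of_le (Finset.range k) fun _ _ => ha

end Filtration

section Substitution

variable {R σ τ : Type*} [CommSemiring R] {w : τ → ℕ} {d : σ → ℕ} {f : σ → MvPolynomial τ R}

theorem weightedTotalDegree'_prod_pow_le
    (hf : ∀ i, weightedTotalDegree' w (f i) ≤ d i) (α : σ →₀ ℕ) :
    weightedTotalDegree' w (α.prod fun i k => f i ^ k) ≤ weight d α := by
  rw [Finsupp.weight_eq_sum_mul]
  exact weightedTotalDegree'_prod_le _ fun i _ => weightedTotalDegree'_pow_le (hf i) (α i)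

theorem weightedHomogeneousComponent_prod_pow
    (hf : ∀ i, weightedTotalDegree' w (f i) ≤ d i) (α : σ →₀ ℕ) :
    weightedHomogeneousComponent w (weight d α) (α.prod fun i k => f i ^ k) =
      α.prod fun i k => weightedHomogeneousComponent w (d i) (f i) ^ k := by
  rw [Finsupp.weight_eq_sum_mul, Finsupp.prod, Finsupp.prod,
    weightedHomogeneousComponent_prod_of_le _ fun i _ => weightedTotalDegree'_pow_le (hf i) (α i)]
  exact Finset.prod_congr rfl fun i _ => weightedHomogeneousComponent_pow_of_le (hf i) (α i)

theorem weightedTotalDegree'_aeval_le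
    (hf : ∀ i, weightedTotalDegree' w (f i) ≤ d i) {P : MvPolynomial σ R} {D : ℕ}
    (hP : weightedTotalDegree' d P ≤ D) : weightedTotalDegree' w (aeval f P) ≤ D := by
  rw [weightedTotalDegree'_le_iff] at hP
  rw [P.as_sum, map_sum]
  refine weightedTotalDegree'_sum_le w _ fun α hα => ?_
  rw [aeval_monomial, ← Algebra.smul_def]
  exact (weightedTotalDegree'_smul_le w _ _).trans
    ((weightedTotalDegree'_prod_pow_le hf α).trans (WithBot.coe_le_coe.2 (hP α hα)))

theorem weightedHomogeneousComponent_aeval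
    (hf : ∀ i, weightedTotalDegree' w (f i) ≤ d i) {P : MvPolynomial σ R} {D : ℕ}
    (hP : weightedTotalDegree' d P ≤ D) :
    weightedHomogeneousComponent w D (aeval f P) =
      aeval (fun i => weightedHomogeneousComponent w (d i) (f i))
        (weightedHomogeneousComponent d D P) := by
  rw [weightedTotalDegree'_le_iff] at hP
  rw [P.as_sum]
  simp only [map_sum]
  refine Finset.sum_congr rfl fun α hα => ?_
  have hα' := isWeightedHomogeneous_monomial d α (coeff α P) rfl
  rw [aeval_monomial, ← Algebra.smul_def, map_smul]
  rcases (hP α hα).eq_or_lt with hD | hD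
  · rw [← hD, hα'.weightedHomogeneousComponent_same, aeval_monomial, ← Algebra.smul_def,
      weightedHomogeneousComponent_prod_pow hf]
  · have hlt : weightedTotalDegree' w (α.prod fun i k => f i ^ k) < D :=
      (weightedTotalDegree'_prod_pow_le hf α).trans_lt (WithBot.coe_lt_coe.2 hD)
    rw [hα'.weightedHomogeneousComponent_ne D hD.ne', map_zero,
      (weightedTotalDegree'_lt_iff_weightedHomogeneousComponent_eq_zero w hlt.le).1 hlt,
      smul_zero]

end Substitution

end MvPolynomial

theorem stmt7_general {K : Type*} [Field K]
    {n : ℕ} (w : Fin n → ℕ)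
    (f : Fin n → MvPolynomial (Fin n) K)
    (d : Fin n → ℕ) (hd : ∀ i, d i = weightedTotalDegree w (f i))
    (P : MvPolynomial (Fin n) K) :
    weightedTotalDegree' w (aeval f P) ≤ weightedTotalDegree' d P ∧
    (weightedTotalDegree' w (aeval f P) < weightedTotalDegree' d P ↔
      P ≠ 0 ∧ ldt d P ∈ relIdeal w f) := by
  have hf : ∀ i, weightedTotalDegree' w (f i) ≤ d i := fun i =>
    hd i ▸ weightedTotalDegree'_le_weightedTotalDegree w (f i)
  by_cases hP : P = 0
  · simp [hP, weightedTotalDegree'_zero]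
  -- `weightedTotalDegree_coe` is stated with `WithBot.some`, the lemmas above with `Nat.cast`
  have hPD : weightedTotalDegree' d P = (weightedTotalDegree d P : ℕ) :=
    (weightedTotalDegree_coe d P hP).trans (Nat.cast_withBot _).symm
  have hle := weightedTotalDegree'_aeval_le hf hPD.le
  refine ⟨hPD ▸ hle, ?_⟩
  rw [hPD, weightedTotalDegree'_lt_iff_weightedHomogeneousComponent_eq_zero w hle,
    weightedHomogeneousComponent_aeval hf hPD.le]
  simp [hP, relIdeal, ldt, hd]

/-- Lemma: `deg₁(P∘Φ) ≤ deg₂ P` (degrees in `WithBot ℕ`, so `deg 0 = ⊥`), with strict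
inequality if and only if `P ≠ 0` and the `deg₂`-leading term of `P` lies in the ideal
of relations. -/
theorem stmt7 {K : Type*} [Field K] [IsAlgClosed K] [CharZero K]
    {n : ℕ} (w : Fin n → ℕ) (hw : ∀ i, 0 < w i)
    (f : Fin n → MvPolynomial (Fin n) K)
    (hf : Function.Bijective
      ⇑(aeval f : MvPolynomial (Fin n) K →ₐ[K] MvPolynomial (Fin n) K))
    (d : Fin n → ℕ) (hd : ∀ i, d i = weightedTotalDegree w (f i))
    (P : MvPolynomial (Fin n) K) :
    weightedTotalDegree' w (aeval f P) ≤ weightedTotalDegree' d P ∧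
    (weightedTotalDegree' w (aeval f P) < weightedTotalDegree' d P ↔
      P ≠ 0 ∧ ldt d P ∈ relIdeal w f) :=
  stmt7_general w f d hd P
end

section
/- Let Φ=(f_1,…,f_n) be a polynomial automorphism of K^n, deg_1 a p.w.h. degree with weights w_1,…,w_n, and deg_2 the p.w.h. degree with weights d_i = deg_1(f_i). With Δ_i(P) = j(g_1,…,g_{i-1},P,g_{i+1},…,g_n), where Φ^{-1}=(g_1,…,g_n), there exists an index i ∈ {1,…,n} such that deg_2(Δ_i) ≥ −w_i. -/
/-!
By Cramer's rule, `Δᵢ(xⱼ)` is the `(j, i)` cofactor of the Jacobian matrix of `g`, that is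
`det J(g) · g*(∂fⱼ/∂xᵢ)`, and `det J(g)` is a nonzero constant because `J(g)` is invertible with
inverse `g*(J(f))`. Substituting the `fₖ` raises the `deg₂`-degree to at most the `deg₁`-degree, so
`f* ∘ g* = id` gives `deg₂(g* P) ≥ deg₁ P`. Finally, if `xᵢ` occurs in a monomial of `fⱼ` of top
`deg₁`-degree `dⱼ`, then `deg₁(∂fⱼ/∂xᵢ) ≥ dⱼ - wᵢ`.
-/

open MvPolynomial

/-- The Jacobian determinant of an `n`-tuple of polynomials in `n` variables. -/
noncomputable def jacDet {K : Type*} [CommRing K] {n : ℕ}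
    (P : Fin n → MvPolynomial (Fin n) K) : MvPolynomial (Fin n) K :=
  Matrix.det (Matrix.of fun i j => pderiv j (P i))

namespace MvPolynomial

variable {R σ τ : Type*} [CommSemiring R] (w : σ → ℕ)

theorem weightedTotalDegree_mul_le (p q : MvPolynomial σ R) :
    weightedTotalDegree w (p * q) ≤ weightedTotalDegree w p + weightedTotalDegree w q := by
  classical
  refine Finset.sup_le fun m hm => ?_
  obtain ⟨u, hu, v, hv, rfl⟩ := Finset.mem_add.mp (support_mul p q hm)
  rw [map_add]
  exact add_le_add (le_weightedTotalDegree w hu) (le_weightedTotalDegree w hv)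

theorem weightedTotalDegree_sum_le {ι : Type*} (s : Finset ι) (p : ι → MvPolynomial σ R)
    {b : ℕ} (hb : ∀ i ∈ s, weightedTotalDegree w (p i) ≤ b) :
    weightedTotalDegree w (∑ i ∈ s, p i) ≤ b := by
  classical
  refine Finset.sup_le fun m hm => ?_
  obtain ⟨i, hi, hmi⟩ := Finset.mem_biUnion.mp (support_sum hm)
  exact (le_weightedTotalDegree w hmi).trans (hb i hi)

theorem weightedTotalDegree_C (r : R) : weightedTotalDegree w (C r : MvPolynomial σ R) = 0 := by
  classical
  refine le_antisymm (Finset.sup_le fun m hm => ?_) (Nat.zero_le _)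
  rw [Finset.mem_singleton.mp (support_monomial_subset hm), map_zero]

theorem weightedTotalDegree_prod_le {ι : Type*} (s : Finset ι) (p : ι → MvPolynomial σ R) :
    weightedTotalDegree w (∏ i ∈ s, p i) ≤ ∑ i ∈ s, weightedTotalDegree w (p i) := by
  classical
  induction s using Finset.induction with
  | empty => simpa using (weightedTotalDegree_C w (1 : R)).le
  | insert i s hi ih =>
    rw [Finset.prod_insert hi, Finset.sum_insert hi]
    exact (weightedTotalDegree_mul_le w _ _).trans (Nat.add_le_add_left ih _)

theorem weightedTotalDegree_pow_le (p : MvPolynomial σ R) (k : ℕ) :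
    weightedTotalDegree w (p ^ k) ≤ k * weightedTotalDegree w p := by
  simpa using weightedTotalDegree_prod_le w (Finset.range k) fun _ => p

theorem weightedTotalDegree_aeval_le (f : τ → MvPolynomial σ R) (Q : MvPolynomial τ R) :
    weightedTotalDegree w (aeval f Q) ≤
      weightedTotalDegree (fun k => weightedTotalDegree w (f k)) Q := by
  conv_lhs => rw [Q.as_sum, map_sum]
  refine weightedTotalDegree_sum_le w _ _ fun m hm => ?_
  rw [aeval_monomial, algebraMap_eq, Finsupp.prod]
  calc weightedTotalDegree w (C (coeff m Q) * ∏ k ∈ m.support, f k ^ m k)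
      ≤ 0 + ∑ k ∈ m.support, m k * weightedTotalDegree w (f k) := by
        refine (weightedTotalDegree_mul_le w _ _).trans (add_le_add ?_ ?_)
        · exact (weightedTotalDegree_C w _).le
        · exact (weightedTotalDegree_prod_le w _ _).trans
            (Finset.sum_le_sum fun k _ => weightedTotalDegree_pow_le w _ _)
    _ ≤ _ := by
        rw [zero_add]
        exact le_weightedTotalDegree _ hm

theorem weightedTotalDegree_smul {S : Type*} [Semiring S] [IsDomain S] [Module S R]
    [Module.IsTorsionFree S R] {a : S} (ha : a ≠ 0) (p : MvPolynomial σ R) :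
    weightedTotalDegree w (a • p) = weightedTotalDegree w p := by
  rw [weightedTotalDegree, support_smul_eq ha, weightedTotalDegree]

theorem exists_weight_eq_weightedTotalDegree {p : MvPolynomial σ R}
    (hp : p.totalDegree ≠ 0) :
    ∃ m ∈ p.support, m ≠ 0 ∧ Finsupp.weight w m = weightedTotalDegree w p := by
  classical
  have hne : (p.support.filter (· ≠ 0)).Nonempty := by
    contrapose! hp
    refine (totalDegree_eq_zero_iff (p := p)).mpr fun m hm x => ?_
    have : m = 0 := by simpa using Finset.filter_eq_empty_iff.mp hp hm
    simp [this]
  obtain ⟨m, hm, hmax⟩ := Finset.exists_mem_eq_sup _ hne (Finsupp.weight w)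
  obtain ⟨hm, hm0⟩ := Finset.mem_filter.mp hm
  refine ⟨m, hm, hm0, le_antisymm (le_weightedTotalDegree w hm) (Finset.sup_le fun m' hm' => ?_)⟩
  rcases eq_or_ne m' 0 with rfl | hm'0
  · simp
  · exact hmax ▸ Finset.le_sup (Finset.mem_filter.mpr ⟨hm', hm'0⟩)

theorem pderiv_aeval [Fintype σ] (g : σ → MvPolynomial σ R) (l : σ) (P : MvPolynomial σ R) :
    pderiv l (aeval g P) = ∑ k, aeval g (pderiv k P) * pderiv l (g k) := by
  classical
  induction P using MvPolynomial.induction_on with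
  | C c => simp
  | add p q hp hq => simp only [map_add, hp, hq, add_mul, Finset.sum_add_distrib]
  | mul_X p i hp =>
    simp only [map_mul, aeval_X, pderiv_mul, hp, pderiv_X, map_add, add_mul, Finset.sum_mul,
      Finset.sum_add_distrib, Pi.single_apply]
    simp [mul_right_comm _ (g i)]

theorem totalDegree_ne_zero_of_aeval_eq_X [Nontrivial R] {g : σ → MvPolynomial σ R}
    {p : MvPolynomial σ R} {j : σ} (h : aeval g p = X j) : p.totalDegree ≠ 0 := by
  intro hp
  rw [totalDegree_eq_zero_iff_eq_C.mp hp, aeval_C] at h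
  simpa using congrArg totalDegree h

theorem exists_mem_support_pderiv [NoZeroDivisors R] [CharZero R] {p : MvPolynomial σ R}
    {m : σ →₀ ℕ} (hm : m ∈ p.support) {i : σ} (hmi : m i ≠ 0) :
    ∃ m' ∈ (pderiv i p).support, m' + Finsupp.single i 1 = m := by
  classical
  have hm' : m - Finsupp.single i 1 + Finsupp.single i 1 = m :=
    tsub_add_cancel_of_le (Finsupp.single_le_iff.mpr (Nat.one_le_iff_ne_zero.mpr hmi))
  refine ⟨m - Finsupp.single i 1, mem_support_iff.mpr ?_, hm'⟩
  rw [coeff_pderiv, hm']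
  exact mul_ne_zero (mem_support_iff.mp hm) (Nat.cast_add_one_ne_zero _)

noncomputable def jacMatrix (P : σ → MvPolynomial σ R) : Matrix σ σ (MvPolynomial σ R) :=
  Matrix.of fun i j => pderiv j (P i)

theorem jacMatrix_X [DecidableEq σ] : jacMatrix (X : σ → MvPolynomial σ R) = 1 := by
  ext i j
  simp [jacMatrix, pderiv_X, Matrix.one_apply, Pi.single_apply]

theorem jacMatrix_aeval [Fintype σ] (f g : σ → MvPolynomial σ R) :
    jacMatrix (fun k => aeval g (f k)) = (jacMatrix f).map (aeval g) * jacMatrix g := by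
  ext1 k l
  exact pderiv_aeval g l (f k)

end MvPolynomial

theorem jacDet_update_X {K : Type*} [CommRing K] {n : ℕ} (g : Fin n → MvPolynomial (Fin n) K)
    (i j : Fin n) : jacDet (Function.update g i (X j)) = (jacMatrix g).adjugate j i := by
  rw [Matrix.adjugate_apply, jacDet]
  congr 1
  ext k l
  rcases eq_or_ne k i with rfl | hk
  · simp [pderiv_X, Pi.single_apply, eq_comm]
  · simp [hk, jacMatrix]

theorem jacDet_update_X_eq_smul {K : Type*} [Field K] {n : ℕ}
    {f g : Fin n → MvPolynomial (Fin n) K} (hgf : ∀ k, aeval g (f k) = X k) (i j : Fin n) :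
    ∃ r : K, r ≠ 0 ∧ jacDet (Function.update g i (X j)) = r • aeval g (pderiv i (f j)) := by
  set A := jacMatrix g
  set B := (jacMatrix f).map (aeval g)
  have hBA : B * A = 1 := by
    rw [← jacMatrix_aeval, ← jacMatrix_X]
    exact congrArg jacMatrix (funext hgf)
  obtain ⟨r, hr, hdet⟩ := isUnit_iff_eq_C_of_isReduced.mp (Matrix.isUnit_det_of_left_inverse hBA)
  have hadj : A.adjugate = A.det • B :=
    calc A.adjugate = B * A * A.adjugate := by rw [hBA, Matrix.one_mul]
      _ = A.det • B := by rw [Matrix.mul_assoc, Matrix.mul_adjugate, Matrix.mul_smul, Matrix.mul_one]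
  refine ⟨r, hr.ne_zero, ?_⟩
  rw [jacDet_update_X, hadj, hdet, Matrix.smul_apply, smul_eq_mul, ← C_mul']
  rfl

/-- Since `deg₂(Δᵢ) = maxⱼ (deg₂(Δᵢ(xⱼ)) - dⱼ)`, the bound `deg₂(Δᵢ) ≥ -wᵢ` is witnessed by a `j`
with `Δᵢ(xⱼ) ≠ 0` and `dⱼ ≤ deg₂(Δᵢ(xⱼ)) + wᵢ`, where `Δᵢ(xⱼ) = jacDet (update g i (X j))`. -/
theorem stmt12_general {K : Type*} [Field K] [CharZero K]
    {n : ℕ} (hn : 0 < n) (w : Fin n → ℕ)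
    (f g : Fin n → MvPolynomial (Fin n) K)
    (hfg : ∀ i, aeval f (g i) = X i) (hgf : ∀ i, aeval g (f i) = X i)
    (d : Fin n → ℕ) (hd : ∀ i, d i = weightedTotalDegree w (f i)) :
    ∃ i j : Fin n, jacDet (Function.update g i (X j)) ≠ 0 ∧
      d j ≤ weightedTotalDegree d (jacDet (Function.update g i (X j))) + w i := by
  let j : Fin n := ⟨0, hn⟩
  obtain ⟨m, hm, hm0, hmw⟩ :=
    exists_weight_eq_weightedTotalDegree w (totalDegree_ne_zero_of_aeval_eq_X (hgf j))
  obtain ⟨i, hmi⟩ : ∃ i, m i ≠ 0 := by simpa [Finsupp.ext_iff] using hm0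
  obtain ⟨m', hm', rfl⟩ := exists_mem_support_pderiv hm hmi
  obtain ⟨r, hr, hΔ⟩ := jacDet_update_X_eq_smul hgf i j
  have hQ : aeval f (aeval g (pderiv i (f j))) = pderiv i (f j) := by
    rw [comp_aeval_apply]
    simp only [hfg]
    exact aeval_X_left_apply _
  refine ⟨i, j, ?_, ?_⟩
  · rw [hΔ]
    refine smul_ne_zero hr fun h => ?_
    rw [h, map_zero] at hQ
    simp [← hQ] at hm'
  · rw [hΔ, weightedTotalDegree_smul d hr]
    calc d j = Finsupp.weight w m' + w i := by
          rw [hd, ← hmw, map_add, Finsupp.weight_single, smul_eq_mul, one_mul]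
      _ ≤ weightedTotalDegree w (aeval f (aeval g (pderiv i (f j)))) + w i := by
          rw [hQ]
          exact Nat.add_le_add_right (le_weightedTotalDegree w hm') _
      _ ≤ weightedTotalDegree d (aeval g (pderiv i (f j))) + w i := by
          refine Nat.add_le_add_right ?_ _
          simpa only [← hd] using weightedTotalDegree_aeval_le w f _

/-- Lemma: there is an index `i` such that `deg₂(Δᵢ) ≥ -wᵢ`, where
`Δᵢ(P) = j(g₁,…,g_{i-1},P,g_{i+1},…,gₙ)`.  Since the degree of a derivation is the
maximum over the variables `xⱼ` of `deg₂(Δᵢ(xⱼ)) - deg₂(xⱼ)`, this is expressed as: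
there exist `i` and `j` with `Δᵢ(xⱼ) ≠ 0` and `deg₂(Δᵢ(xⱼ)) + wᵢ ≥ dⱼ`. -/
theorem stmt12 {K : Type*} [Field K] [IsAlgClosed K] [CharZero K]
    {n : ℕ} (hn : 0 < n) (w : Fin n → ℕ) (hw : ∀ i, 0 < w i)
    (f g : Fin n → MvPolynomial (Fin n) K)
    (hf : Function.Bijective
      ⇑(aeval f : MvPolynomial (Fin n) K →ₐ[K] MvPolynomial (Fin n) K))
    (hfg : ∀ i, aeval f (g i) = X i) (hgf : ∀ i, aeval g (f i) = X i)
    (d : Fin n → ℕ) (hd : ∀ i, d i = weightedTotalDegree w (f i)) :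
    ∃ i j : Fin n, jacDet (Function.update g i (X j)) ≠ 0 ∧
      d j ≤ weightedTotalDegree d (jacDet (Function.update g i (X j))) + w i :=
  stmt12_general hn w f g hfg hgf d hd
end
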